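/- For a GHZ multigraph G with 2-cut {u,v} and parts A (odd), B: for any non-monochromatic colouring c = i_A j_B k_u ℓ_v, if either the horizontal weight H_c = w(j_B k_u)·w(i_A ℓ_v) or the vertical weight V_c = w(i_A k_u)·w(j_B ℓ_v) is non-zero, then all four factors w(i_A k_u), w(j_B ℓ_v), w(i_A ℓ_v), w(j_B k_u) are non-zero. -/

import Mathlib

open scoped Classical

/-- An edge-coloured edge-weighted multigraph (no self-loops) on vertex set `V`.
Each edge `e` has two endpoints `fst e`, `snd e`, a colour on each of its two
half-edges (`cf e` at `fst e`, `cs e` at `snd e`) and a complex weight `w e`. -/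
structure EMG (V : Type) [Fintype V] [DecidableEq V] where
  E : Type
  [fintypeE : Fintype E]
  fst : E → V
  snd : E → V
  noLoop : ∀ e, fst e ≠ snd e
  cf : E → ℕ
  cs : E → ℕ
  w : E → ℂ

namespace EMG

attribute [instance] EMG.fintypeE

variable {V : Type} [Fintype V] [DecidableEq V] (G : EMG V)

/-- `e` is incident to vertex `x`. -/
def inc (e : G.E) (x : V) : Prop := G.fst e = x ∨ G.snd e = x

/-- `M` is a perfect matching of the induced subgraph on `S`: all edges of `M`
lie inside `S` and every vertex of `S` is covered exactly once. -/
def IsPMOn (S : Finset V) (M : Finset G.E) : Prop :=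
  (∀ e ∈ M, G.fst e ∈ S ∧ G.snd e ∈ S) ∧ ∀ x ∈ S, ∃! e, e ∈ M ∧ G.inc e x

/-- `M` is a perfect matching of `G`. -/
def IsPM (M : Finset G.E) : Prop := G.IsPMOn Finset.univ M

/-- `M` induces the vertex colouring `vc`: every edge of `M` survives the
filtering by `vc` (half-edge colours agree with the endpoint colours). -/
def Induces (M : Finset G.E) (vc : V → ℕ) : Prop :=
  ∀ e ∈ M, G.cf e = vc (G.fst e) ∧ G.cs e = vc (G.snd e)

/-- The weight of the vertex colouring `vc` on the induced subgraph on `S`: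
the sum over perfect matchings of the filtered subgraph of the products of
edge weights. -/
noncomputable def wcolOn (S : Finset V) (vc : V → ℕ) : ℂ :=
  ∑ M ∈ Finset.univ.filter (fun M => G.IsPMOn S M ∧ G.Induces M vc),
    ∏ e ∈ M, G.w e

/-- The weight of the vertex colouring `vc` in `G`. -/
noncomputable def wcol (vc : V → ℕ) : ℂ := G.wcolOn Finset.univ vc

/-- `vc` is feasible: the subgraph filtered by `vc` has a perfect matching. -/
def Feasible (vc : V → ℕ) : Prop := ∃ M, G.IsPM M ∧ G.Induces M vc

/-- `G` is a GHZ graph: all feasible monochromatic vertex colourings have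
weight `1` and all non-monochromatic vertex colourings have weight `0`. -/
def IsGHZ : Prop :=
  (∀ i : ℕ, G.Feasible (fun _ => i) → G.wcol (fun _ => i) = 1) ∧
  (∀ vc : V → ℕ, (¬ ∃ i : ℕ, ∀ x, vc x = i) → G.wcol vc = 0)

/-- `G` is a g-GHZ graph: all feasible monochromatic vertex colourings have
non-zero weight and all non-monochromatic vertex colourings have weight `0`. -/
def IsgGHZ : Prop :=
  (∀ i : ℕ, G.Feasible (fun _ => i) → G.wcol (fun _ => i) ≠ 0) ∧
  (∀ vc : V → ℕ, (¬ ∃ i : ℕ, ∀ x, vc x = i) → G.wcol vc = 0)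

/-- The dimension: the number of feasible monochromatic vertex colourings. -/
noncomputable def dimension : ℕ := Set.ncard {i : ℕ | G.Feasible (fun _ => i)}

/-- The skeleton of `G`: its underlying simple graph. -/
def skeleton : SimpleGraph V where
  Adj a b := a ≠ b ∧ ∃ e : G.E, (G.fst e = a ∧ G.snd e = b) ∨ (G.fst e = b ∧ G.snd e = a)
  symm := by
    constructor
    intro a b h
    refine ⟨h.1.symm, ?_⟩
    obtain ⟨e, he⟩ := h.2
    exact ⟨e, he.symm⟩
  loopless := by constructor; intro a h; exact h.1 rfl

/-- Replace the weight function of `G`. -/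
def reweight (w' : G.E → ℂ) : EMG V := { G with w := w' }

/-- Delete the edges in `D` from `G`. -/
noncomputable def deleteEdges (D : Finset G.E) : EMG V where
  E := {e : G.E // e ∉ D}
  fst e := G.fst e.1
  snd e := G.snd e.1
  noLoop e := G.noLoop e.1
  cf e := G.cf e.1
  cs e := G.cs e.1
  w e := G.w e.1

/-- `M` is a monochromatic perfect matching of colour `i` (as a set of coloured
edges: all half-edges of `M` carry colour `i`). -/
def MonoPM (M : Finset G.E) (i : ℕ) : Prop :=
  ∀ e ∈ M, G.cf e = i ∧ G.cs e = i

/-- Both endpoints of `e` lie in `S`. -/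
def bothIn (S : Finset V) (e : G.E) : Prop := G.fst e ∈ S ∧ G.snd e ∈ S

/-- `e` joins a vertex of `S` to the vertex `x`. -/
def connectsTo (S : Finset V) (x : V) (e : G.E) : Prop :=
  (G.fst e ∈ S ∧ G.snd e = x) ∨ (G.snd e ∈ S ∧ G.fst e = x)

end EMG

section Aux

namespace EMG

variable {V : Type} [Fintype V] [DecidableEq V] (G : EMG V)

theorem aux_wcolOn_congr (S : Finset V) (vc vc' : V → ℕ)
    (h : ∀ x ∈ S, vc x = vc' x) : G.wcolOn S vc = G.wcolOn S vc' := by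
  unfold wcolOn
  congr 1
  apply Finset.filter_congr
  intro M _
  constructor
  · rintro ⟨hpm, hind⟩
    refine ⟨hpm, fun e he => ?_⟩
    obtain ⟨h1, h2⟩ := hpm.1 e he
    obtain ⟨h3, h4⟩ := hind e he
    exact ⟨h3.trans (h _ h1), h4.trans (h _ h2)⟩
  · rintro ⟨hpm, hind⟩
    refine ⟨hpm, fun e he => ?_⟩
    obtain ⟨h1, h2⟩ := hpm.1 e he
    obtain ⟨h3, h4⟩ := hind e he
    exact ⟨h3.trans (h _ h1).symm, h4.trans (h _ h2).symm⟩

theorem aux_split (S₁ S₂ : Finset V) (hS : Disjoint S₁ S₂)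
    (hcov : ∀ x : V, x ∈ S₁ ∨ x ∈ S₂) (c : V → ℕ) :
    (∑ M ∈ Finset.univ.filter (fun M => (G.IsPM M ∧ G.Induces M c) ∧
        ∀ e ∈ M, G.bothIn S₁ e ∨ G.bothIn S₂ e), ∏ e ∈ M, G.w e) =
      G.wcolOn S₁ c * G.wcolOn S₂ c := by
  unfold wcolOn
  rw [Finset.sum_mul_sum, ← Finset.sum_product']
  symm
  refine Finset.sum_nbij' (fun p => p.1 ∪ p.2)
    (fun M => (M.filter (G.bothIn S₁), M.filter (G.bothIn S₂))) ?_ ?_ ?_ ?_ ?_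
  · rintro ⟨M₁, M₂⟩ hp
    rw [Finset.mem_product] at hp
    obtain ⟨hp1, hp2⟩ := hp
    rw [Finset.mem_filter] at hp1 hp2
    obtain ⟨_, hpm1, hind1⟩ := hp1
    obtain ⟨_, hpm2, hind2⟩ := hp2
    rw [Finset.mem_filter]
    refine ⟨Finset.mem_univ _, ⟨⟨fun e _ => ⟨Finset.mem_univ _, Finset.mem_univ _⟩, ?_⟩, ?_⟩, ?_⟩
    · intro x _
      rcases hcov x with hx | hx
      · obtain ⟨e, ⟨heM, hex⟩, huniq⟩ := hpm1.2 x hx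
        refine ⟨e, ⟨Finset.mem_union_left _ heM, hex⟩, ?_⟩
        rintro e' ⟨he', hex'⟩
        rcases Finset.mem_union.mp he' with he' | he'
        · exact huniq e' ⟨he', hex'⟩
        · exfalso
          obtain ⟨hf, hs⟩ := hpm2.1 e' he'
          rcases hex' with he | he
          · exact Finset.disjoint_left.mp hS hx (he ▸ hf)
          · exact Finset.disjoint_left.mp hS hx (he ▸ hs)
      · obtain ⟨e, ⟨heM, hex⟩, huniq⟩ := hpm2.2 x hx
        refine ⟨e, ⟨Finset.mem_union_right _ heM, hex⟩, ?_⟩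
        rintro e' ⟨he', hex'⟩
        rcases Finset.mem_union.mp he' with he' | he'
        · exfalso
          obtain ⟨hf, hs⟩ := hpm1.1 e' he'
          rcases hex' with he | he
          · exact Finset.disjoint_right.mp hS hx (he ▸ hf)
          · exact Finset.disjoint_right.mp hS hx (he ▸ hs)
        · exact huniq e' ⟨he', hex'⟩
    · intro e he
      rcases Finset.mem_union.mp he with he | he
      · exact hind1 e he
      · exact hind2 e he
    · intro e he
      rcases Finset.mem_union.mp he with he | he
      · exact Or.inl (hpm1.1 e he)
      · exact Or.inr (hpm2.1 e he)
  · intro M hM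
    rw [Finset.mem_filter] at hM
    obtain ⟨_, ⟨hpm, hind⟩, hQ⟩ := hM
    have hmem : ∀ e ∈ M, ∀ x : V, G.inc e x → x ∈ S₁ → G.bothIn S₁ e := by
      intro e he x hix hx
      rcases hQ e he with hb | hb
      · exact hb
      · exfalso
        rcases hix with hh | hh
        · exact Finset.disjoint_left.mp hS hx (hh ▸ hb.1)
        · exact Finset.disjoint_left.mp hS hx (hh ▸ hb.2)
    have hmem2 : ∀ e ∈ M, ∀ x : V, G.inc e x → x ∈ S₂ → G.bothIn S₂ e := by
      intro e he x hix hx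
      rcases hQ e he with hb | hb
      · exfalso
        rcases hix with hh | hh
        · exact Finset.disjoint_right.mp hS hx (hh ▸ hb.1)
        · exact Finset.disjoint_right.mp hS hx (hh ▸ hb.2)
      · exact hb
    rw [Finset.mem_product]
    constructor <;> rw [Finset.mem_filter]
    · refine ⟨Finset.mem_univ _, ⟨fun e he => (Finset.mem_filter.mp he).2, ?_⟩,
        fun e he => hind e (Finset.mem_filter.mp he).1⟩
      intro x hx
      obtain ⟨e, ⟨heM, hex⟩, huniq⟩ := hpm.2 x (Finset.mem_univ x)
      refine ⟨e, ⟨Finset.mem_filter.mpr ⟨heM, hmem e heM x hex hx⟩, hex⟩, ?_⟩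
      rintro e' ⟨he', hex'⟩
      exact huniq e' ⟨(Finset.mem_filter.mp he').1, hex'⟩
    · refine ⟨Finset.mem_univ _, ⟨fun e he => (Finset.mem_filter.mp he).2, ?_⟩,
        fun e he => hind e (Finset.mem_filter.mp he).1⟩
      intro x hx
      obtain ⟨e, ⟨heM, hex⟩, huniq⟩ := hpm.2 x (Finset.mem_univ x)
      refine ⟨e, ⟨Finset.mem_filter.mpr ⟨heM, hmem2 e heM x hex hx⟩, hex⟩, ?_⟩
      rintro e' ⟨he', hex'⟩
      exact huniq e' ⟨(Finset.mem_filter.mp he').1, hex'⟩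
  · rintro ⟨M₁, M₂⟩ hp
    rw [Finset.mem_product] at hp
    obtain ⟨hp1, hp2⟩ := hp
    rw [Finset.mem_filter] at hp1 hp2
    obtain ⟨_, hpm1, _⟩ := hp1
    obtain ⟨_, hpm2, _⟩ := hp2
    have hd12 : ∀ e ∈ M₂, e ∉ M₁ := by
      intro e he2 he1
      exact Finset.disjoint_left.mp hS (hpm1.1 e he1).1 (hpm2.1 e he2).1
    have e1 : (M₁ ∪ M₂).filter (G.bothIn S₁) = M₁ := by
      ext e
      rw [Finset.mem_filter, Finset.mem_union]
      constructor
      · rintro ⟨he | he, hb⟩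
        · exact he
        · exact absurd hb.1 (Finset.disjoint_right.mp hS (hpm2.1 e he).1)
      · intro he
        exact ⟨Or.inl he, hpm1.1 e he⟩
    have e2 : (M₁ ∪ M₂).filter (G.bothIn S₂) = M₂ := by
      ext e
      rw [Finset.mem_filter, Finset.mem_union]
      constructor
      · rintro ⟨he | he, hb⟩
        · exact absurd hb.1 (Finset.disjoint_left.mp hS (hpm1.1 e he).1)
        · exact he
      · intro he
        exact ⟨Or.inr he, hpm2.1 e he⟩
    simp [e1, e2]
  · intro M hM
    rw [Finset.mem_filter] at hM
    obtain ⟨_, ⟨hpm, hind⟩, hQ⟩ := hM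
    simp only []
    rw [← Finset.filter_or]
    exact Finset.filter_true_of_mem hQ
  · rintro ⟨M₁, M₂⟩ hp
    rw [Finset.mem_product] at hp
    obtain ⟨hp1, hp2⟩ := hp
    rw [Finset.mem_filter] at hp1 hp2
    obtain ⟨_, hpm1, _⟩ := hp1
    obtain ⟨_, hpm2, _⟩ := hp2
    have hd : Disjoint M₁ M₂ := by
      rw [Finset.disjoint_left]
      intro e he1 he2
      exact Finset.disjoint_left.mp hS (hpm1.1 e he1).1 (hpm2.1 e he2).1
    exact (Finset.prod_union hd).symm

theorem aux_halfcover (u v : V) (huv : u ≠ v) (A B : Finset V)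
    (hdisj : Disjoint A B) (huA : u ∉ A) (huB : u ∉ B) (hvA : v ∉ A) (hvB : v ∉ B)
    (hcover : ∀ x : V, x ∈ A ∨ x ∈ B ∨ x = u ∨ x = v)
    (hsep : ∀ e : G.E, ¬ (G.fst e ∈ A ∧ G.snd e ∈ B) ∧ ¬ (G.fst e ∈ B ∧ G.snd e ∈ A))
    (M : Finset G.E) (hM2 : ∀ x : V, ∃! e, e ∈ M ∧ G.inc e x)
    (hMv : ∀ e ∈ M, ¬ ((G.fst e = v ∧ G.snd e ∈ A) ∨ (G.snd e = v ∧ G.fst e ∈ A)))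
    (e0 : G.E) (he0M : e0 ∈ M)
    (he0 : (G.fst e0 = u ∧ G.snd e0 ∈ A) ∨ (G.snd e0 = u ∧ G.fst e0 ∈ A)) :
    ∀ e ∈ M, G.bothIn (insert u A) e ∨ G.bothIn (insert v B) e := by
  intro e heM
  have huniq : ∀ e' ∈ M, G.inc e' u → e' = e0 := by
    intro e' he' hi
    refine (hM2 u).unique ⟨he', hi⟩ ⟨he0M, ?_⟩
    rcases he0 with ⟨h1, _⟩ | ⟨h1, _⟩
    · exact Or.inl h1
    · exact Or.inr h1
  have hu1 : G.inc e u → G.bothIn (insert u A) e := by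
    intro hi
    have he' := huniq e heM hi
    subst he'
    rcases he0 with ⟨h1, h2⟩ | ⟨h1, h2⟩
    · exact ⟨h1 ▸ Finset.mem_insert_self u A, Finset.mem_insert_of_mem h2⟩
    · exact ⟨Finset.mem_insert_of_mem h2, h1 ▸ Finset.mem_insert_self u A⟩
  rcases hcover (G.fst e) with hf | hf | hf | hf <;>
    rcases hcover (G.snd e) with hs | hs | hs | hs
  · exact Or.inl ⟨Finset.mem_insert_of_mem hf, Finset.mem_insert_of_mem hs⟩
  · exact absurd ⟨hf, hs⟩ (hsep e).1
  · exact Or.inl ⟨Finset.mem_insert_of_mem hf, hs ▸ Finset.mem_insert_self u A⟩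
  · exact absurd (Or.inr ⟨hs, hf⟩) (hMv e heM)
  · exact absurd ⟨hf, hs⟩ (hsep e).2
  · exact Or.inr ⟨Finset.mem_insert_of_mem hf, Finset.mem_insert_of_mem hs⟩
  · exfalso
    rcases Finset.mem_insert.mp (hu1 (Or.inr hs)).1 with hh | hh
    · exact huB (hh ▸ hf)
    · exact Finset.disjoint_left.mp hdisj hh hf
  · exact Or.inr ⟨Finset.mem_insert_of_mem hf, hs ▸ Finset.mem_insert_self v B⟩
  · exact Or.inl (hu1 (Or.inl hf))
  · exact Or.inl (hu1 (Or.inl hf))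
  · exact Or.inl (hu1 (Or.inl hf))
  · exact Or.inl (hu1 (Or.inl hf))
  · exact absurd (Or.inl ⟨hf, hs⟩) (hMv e heM)
  · exact Or.inr ⟨hf ▸ Finset.mem_insert_self v B, Finset.mem_insert_of_mem hs⟩
  · exfalso
    rcases Finset.mem_insert.mp (hu1 (Or.inr hs)).1 with hh | hh
    · exact huv ((hf ▸ hh : v = u).symm)
    · exact hvA (hf ▸ hh)
  · exact absurd (hf.trans hs.symm) (G.noLoop e)

theorem aux_parity (u v : V) (huv : u ≠ v) (A B : Finset V)
    (hdisj : Disjoint A B) (huA : u ∉ A) (huB : u ∉ B) (hvA : v ∉ A) (hvB : v ∉ B)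
    (hcover : ∀ x : V, x ∈ A ∨ x ∈ B ∨ x = u ∨ x = v)
    (hsep : ∀ e : G.E, ¬ (G.fst e ∈ A ∧ G.snd e ∈ B) ∧ ¬ (G.fst e ∈ B ∧ G.snd e ∈ A))
    (hodd : Odd A.card)
    (M : Finset G.E) (hM2 : ∀ x : V, ∃! e, e ∈ M ∧ G.inc e x) :
    ((∃ e0 ∈ M, (G.fst e0 = u ∧ G.snd e0 ∈ A) ∨ (G.snd e0 = u ∧ G.fst e0 ∈ A)) ∧
      (∀ e ∈ M, ¬ ((G.fst e = v ∧ G.snd e ∈ A) ∨ (G.snd e = v ∧ G.fst e ∈ A)))) ∨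
    ((∃ e0 ∈ M, (G.fst e0 = v ∧ G.snd e0 ∈ A) ∨ (G.snd e0 = v ∧ G.fst e0 ∈ A)) ∧
      (∀ e ∈ M, ¬ ((G.fst e = u ∧ G.snd e ∈ A) ∨ (G.snd e = u ∧ G.fst e ∈ A)))) := by
  classical
  set f : V → G.E := fun x => (hM2 x).exists.choose with hfdef
  have hfspec : ∀ x : V, f x ∈ M ∧ G.inc (f x) x := fun x => (hM2 x).exists.choose_spec
  have hcardeq : A.card = ∑ e ∈ M, (A.filter fun x => f x = e).card :=
    Finset.card_eq_sum_card_fiberwise (fun x _ => (hfspec x).1)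
  have hcnt : ∀ e ∈ M, (A.filter fun x => f x = e).card =
      (if G.fst e ∈ A then 1 else 0) + (if G.snd e ∈ A then 1 else 0) := by
    intro e he
    have hfiber : (A.filter fun x => f x = e) = A.filter (fun x => G.inc e x) := by
      apply Finset.filter_congr
      intro x hx
      constructor
      · rintro rfl
        exact (hfspec x).2
      · intro hinc
        exact (hM2 x).unique (hfspec x) ⟨he, hinc⟩
    have hne := G.noLoop e
    have hset : (A.filter fun x => G.inc e x) =
        ({G.fst e, G.snd e} : Finset V).filter (fun x => x ∈ A) := by
      ext x
      rw [Finset.mem_filter, Finset.mem_filter, Finset.mem_insert, Finset.mem_singleton, EMG.inc]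
      constructor
      · rintro ⟨h1, h2 | h2⟩
        · exact ⟨Or.inl h2.symm, h1⟩
        · exact ⟨Or.inr h2.symm, h1⟩
      · rintro ⟨h1 | h1, h2⟩
        · exact ⟨h2, Or.inl h1.symm⟩
        · exact ⟨h2, Or.inr h1.symm⟩
    rw [hfiber, hset]
    by_cases hfa : G.fst e ∈ A <;> by_cases hsa : G.snd e ∈ A <;>
      simp [Finset.filter_insert, Finset.filter_singleton, hfa, hsa, hne]
  set pu : G.E → Prop := fun e => (G.fst e = u ∧ G.snd e ∈ A) ∨ (G.snd e = u ∧ G.fst e ∈ A)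
    with hpu
  set pv : G.E → Prop := fun e => (G.fst e = v ∧ G.snd e ∈ A) ∨ (G.snd e = v ∧ G.fst e ∈ A)
    with hpv
  set p1 : G.E → Prop := fun e => pu e ∨ pv e with hp1
  -- edges with exactly one endpoint in A satisfy p1
  have hone : ∀ e ∈ M, ((G.fst e ∈ A ∧ G.snd e ∉ A) ∨ (G.snd e ∈ A ∧ G.fst e ∉ A)) → p1 e := by
    rintro e he (⟨h1, h2⟩ | ⟨h1, h2⟩)
    · have hnB : G.snd e ∉ B := fun hb => (hsep e).1 ⟨h1, hb⟩
      rcases hcover (G.snd e) with hh | hh | hh | hh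
      · exact absurd hh h2
      · exact absurd hh hnB
      · exact Or.inl (Or.inr ⟨hh, h1⟩)
      · exact Or.inr (Or.inr ⟨hh, h1⟩)
    · have hnB : G.fst e ∉ B := fun hb => (hsep e).2 ⟨hb, h1⟩
      rcases hcover (G.fst e) with hh | hh | hh | hh
      · exact absurd hh h2
      · exact absurd hh hnB
      · exact Or.inl (Or.inl ⟨hh, h1⟩)
      · exact Or.inr (Or.inl ⟨hh, h1⟩)
  have hp1one : ∀ e ∈ M, p1 e →
      (if G.fst e ∈ A then 1 else 0) + (if G.snd e ∈ A then 1 else 0) = 1 := by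
    rintro e he ((⟨h1, h2⟩ | ⟨h1, h2⟩) | (⟨h1, h2⟩ | ⟨h1, h2⟩))
    · have : G.fst e ∉ A := h1 ▸ huA
      simp [this, h2]
    · have : G.snd e ∉ A := h1 ▸ huA
      simp [this, h2]
    · have : G.fst e ∉ A := h1 ▸ hvA
      simp [this, h2]
    · have : G.snd e ∉ A := h1 ▸ hvA
      simp [this, h2]
  have hnp1even : ∀ e ∈ M, ¬ p1 e →
      Even ((if G.fst e ∈ A then 1 else 0) + (if G.snd e ∈ A then 1 else 0)) := by
    intro e he hp
    by_cases hfa : G.fst e ∈ A <;> by_cases hsa : G.snd e ∈ A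
    · simp [hfa, hsa]
    · exact absurd (hone e he (Or.inl ⟨hfa, hsa⟩)) hp
    · exact absurd (hone e he (Or.inr ⟨hsa, hfa⟩)) hp
    · simp [hfa, hsa]
  have hsplitsum : A.card = (M.filter p1).card +
      ∑ e ∈ M.filter (fun e => ¬ p1 e),
        ((if G.fst e ∈ A then 1 else 0) + (if G.snd e ∈ A then 1 else 0)) := by
    rw [hcardeq, ← Finset.sum_filter_add_sum_filter_not M p1]
    congr 1
    · rw [Finset.card_eq_sum_ones]
      apply Finset.sum_congr rfl
      intro e he
      rw [Finset.mem_filter] at he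
      rw [hcnt e he.1, hp1one e he.1 he.2]
    · apply Finset.sum_congr rfl
      intro e he
      rw [Finset.mem_filter] at he
      exact hcnt e he.1
  have heven2 : Even (∑ e ∈ M.filter (fun e => ¬ p1 e),
      ((if G.fst e ∈ A then 1 else 0) + (if G.snd e ∈ A then 1 else 0))) := by
    apply Finset.even_sum
    intro e he
    rw [Finset.mem_filter] at he
    exact hnp1even e he.1 he.2
  have hoddp1 : Odd (M.filter p1).card := by
    rw [hsplitsum] at hodd
    rcases heven2 with ⟨m, hm⟩
    rcases hodd with ⟨n, hn⟩
    exact ⟨n - m, by omega⟩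
  -- split filter p1 into pu part and pv part
  have hfeq : M.filter p1 = M.filter pu ∪ M.filter pv := by
    rw [← Finset.filter_or]
  have hdisjuv : Disjoint (M.filter pu) (M.filter pv) := by
    rw [Finset.disjoint_left]
    intro e heu hev
    rw [Finset.mem_filter] at heu hev
    rcases heu.2 with ⟨h1, h2⟩ | ⟨h1, h2⟩ <;> rcases hev.2 with ⟨h3, h4⟩ | ⟨h3, h4⟩
    · exact huv (h1.symm.trans h3)
    · exact hvA (h3 ▸ h2)
    · exact huA (h1 ▸ h4)
    · exact huv (h1.symm.trans h3)
  have hcardu : (M.filter pu).card ≤ 1 := by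
    apply Finset.card_le_one.mpr
    intro e he e' he'
    rw [Finset.mem_filter] at he he'
    have hiu : ∀ (a : G.E), pu a → G.inc a u := by
      rintro a (⟨h1, _⟩ | ⟨h1, _⟩)
      · exact Or.inl h1
      · exact Or.inr h1
    exact (hM2 u).unique ⟨he.1, hiu e he.2⟩ ⟨he'.1, hiu e' he'.2⟩
  have hcardv : (M.filter pv).card ≤ 1 := by
    apply Finset.card_le_one.mpr
    intro e he e' he'
    rw [Finset.mem_filter] at he he'
    have hiv : ∀ (a : G.E), pv a → G.inc a v := by
      rintro a (⟨h1, _⟩ | ⟨h1, _⟩)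
      · exact Or.inl h1
      · exact Or.inr h1
    exact (hM2 v).unique ⟨he.1, hiv e he.2⟩ ⟨he'.1, hiv e' he'.2⟩
  have hcards : (M.filter pu).card + (M.filter pv).card = (M.filter p1).card := by
    rw [hfeq, Finset.card_union_of_disjoint hdisjuv]
  have h1 : ((M.filter pu).card = 1 ∧ (M.filter pv).card = 0) ∨
      ((M.filter pv).card = 1 ∧ (M.filter pu).card = 0) := by
    rcases hoddp1 with ⟨n, hn⟩
    omega
  rcases h1 with ⟨hu1, hv0⟩ | ⟨hv1, hu0⟩
  · left
    constructor
    · obtain ⟨e0, he0⟩ := Finset.card_pos.mp (by omega : 0 < (M.filter pu).card)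
      rw [Finset.mem_filter] at he0
      exact ⟨e0, he0.1, he0.2⟩
    · intro e he hp
      have : e ∈ M.filter pv := Finset.mem_filter.mpr ⟨he, hp⟩
      rw [Finset.card_eq_zero.mp hv0] at this
      exact absurd this (Finset.notMem_empty e)
  · right
    constructor
    · obtain ⟨e0, he0⟩ := Finset.card_pos.mp (by omega : 0 < (M.filter pv).card)
      rw [Finset.mem_filter] at he0
      exact ⟨e0, he0.1, he0.2⟩
    · intro e he hp
      have : e ∈ M.filter pu := Finset.mem_filter.mpr ⟨he, hp⟩
      rw [Finset.card_eq_zero.mp hu0] at this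
      exact absurd this (Finset.notMem_empty e)

end EMG

end Aux

/-- The matching index of a simple graph `H`: the maximum dimension over all
GHZ edge-coloured edge-weighted multigraphs whose skeleton is `H`. -/
noncomputable def matchingIndex {V : Type} [Fintype V] [DecidableEq V]
    (H : SimpleGraph V) : ℕ :=
  sSup {d : ℕ | ∃ G : EMG V, G.skeleton = H ∧ G.IsGHZ ∧ G.dimension = d}

/-- For a GHZ multigraph with a 2-cut `{u,v}` separating `A` (odd) from `B`
and a non-monochromatic colouring `i_A j_B k_u ℓ_v`: if the horizontal weight
`w(j_B k_u)·w(i_A ℓ_v)` or the vertical weight `w(i_A k_u)·w(j_B ℓ_v)` is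
non-zero, then all four factors are non-zero. -/
theorem stmt17 {V : Type} [Fintype V] [DecidableEq V] (G : EMG V)
    (u v : V) (huv : u ≠ v)
    (A B : Finset V)
    (hAne : A.Nonempty) (hBne : B.Nonempty)
    (hdisj : Disjoint A B)
    (huAB : u ∉ A ∧ u ∉ B) (hvAB : v ∉ A ∧ v ∉ B)
    (hcover : ∀ x : V, x ∈ A ∨ x ∈ B ∨ x = u ∨ x = v)
    (hsep : ∀ e : G.E, ¬ (G.fst e ∈ A ∧ G.snd e ∈ B) ∧ ¬ (G.fst e ∈ B ∧ G.snd e ∈ A))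
    (hodd : Odd A.card)
    (hGHZ : G.IsGHZ)
    (i j k l : ℕ) (hnm : ¬ (i = j ∧ j = k ∧ k = l))
    (h :
      G.wcolOn (insert u B) (fun x => if x = u then k else j) *
        G.wcolOn (insert v A) (fun x => if x = v then l else i) ≠ 0 ∨
      G.wcolOn (insert u A) (fun x => if x = u then k else i) *
        G.wcolOn (insert v B) (fun x => if x = v then l else j) ≠ 0) :
    G.wcolOn (insert u A) (fun x => if x = u then k else i) ≠ 0 ∧
    G.wcolOn (insert v B) (fun x => if x = v then l else j) ≠ 0 ∧
    G.wcolOn (insert v A) (fun x => if x = v then l else i) ≠ 0 ∧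
    G.wcolOn (insert u B) (fun x => if x = u then k else j) ≠ 0 := by
  classical
  obtain ⟨huA, huB⟩ := huAB
  obtain ⟨hvA, hvB⟩ := hvAB
  set c : V → ℕ := fun x => if x = u then k else if x = v then l else if x ∈ A then i else j
    with hc
  have hcu : c u = k := by simp [hc]
  have hcv : c v = l := by simp [hc, (Ne.symm huv : v ≠ u)]
  have hcA : ∀ x ∈ A, c x = i := by
    intro x hx
    have h1 : x ≠ u := fun h => huA (h ▸ hx)
    have h2 : x ≠ v := fun h => hvA (h ▸ hx)
    simp [hc, h1, h2, hx]
  have hcB : ∀ x ∈ B, c x = j := by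
    intro x hx
    have h1 : x ≠ u := fun h => huB (h ▸ hx)
    have h2 : x ≠ v := fun h => hvB (h ▸ hx)
    have h3 : x ∉ A := fun h => Finset.disjoint_left.mp hdisj h hx
    simp [hc, h1, h2, h3]
  have hX : G.wcolOn (insert u A) (fun x => if x = u then k else i) =
      G.wcolOn (insert u A) c := by
    apply EMG.aux_wcolOn_congr
    intro x hx
    rcases Finset.mem_insert.mp hx with rfl | hx
    · simp [hcu]
    · have h1 : x ≠ u := fun h => huA (h ▸ hx)
      simp [h1, hcA x hx]
  have hY : G.wcolOn (insert v B) (fun x => if x = v then l else j) =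
      G.wcolOn (insert v B) c := by
    apply EMG.aux_wcolOn_congr
    intro x hx
    rcases Finset.mem_insert.mp hx with rfl | hx
    · simp [hcv]
    · have h1 : x ≠ v := fun h => hvB (h ▸ hx)
      simp [h1, hcB x hx]
  have hZ : G.wcolOn (insert v A) (fun x => if x = v then l else i) =
      G.wcolOn (insert v A) c := by
    apply EMG.aux_wcolOn_congr
    intro x hx
    rcases Finset.mem_insert.mp hx with rfl | hx
    · simp [hcv]
    · have h1 : x ≠ v := fun h => hvA (h ▸ hx)
      simp [h1, hcA x hx]
  have hW : G.wcolOn (insert u B) (fun x => if x = u then k else j) =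
      G.wcolOn (insert u B) c := by
    apply EMG.aux_wcolOn_congr
    intro x hx
    rcases Finset.mem_insert.mp hx with rfl | hx
    · simp [hcu]
    · have h1 : x ≠ u := fun h => huB (h ▸ hx)
      simp [h1, hcB x hx]
  have hnmono : ¬ ∃ m : ℕ, ∀ x : V, c x = m := by
    rintro ⟨m, hm⟩
    obtain ⟨a, ha⟩ := hAne
    obtain ⟨b, hb⟩ := hBne
    have hi : i = m := (hcA a ha).symm.trans (hm a)
    have hj : j = m := (hcB b hb).symm.trans (hm b)
    have hk : k = m := hcu.symm.trans (hm u)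
    have hl : l = m := hcv.symm.trans (hm v)
    exact hnm ⟨hi.trans hj.symm, hj.trans hk.symm, hk.trans hl.symm⟩
  have h0 : G.wcol c = 0 := hGHZ.2 c hnmono
  have hd1 : Disjoint (insert u A) (insert v B) := by
    rw [Finset.disjoint_left]
    intro x hx hx'
    rcases Finset.mem_insert.mp hx with rfl | hx <;>
      rcases Finset.mem_insert.mp hx' with h' | h'
    · exact huv h'
    · exact huB h'
    · exact hvA (h' ▸ hx)
    · exact Finset.disjoint_left.mp hdisj hx h'
  have hd2 : Disjoint (insert v A) (insert u B) := by
    rw [Finset.disjoint_left]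
    intro x hx hx'
    rcases Finset.mem_insert.mp hx with rfl | hx <;>
      rcases Finset.mem_insert.mp hx' with h' | h'
    · exact huv h'.symm
    · exact hvB h'
    · exact huA (h' ▸ hx)
    · exact Finset.disjoint_left.mp hdisj hx h'
  have hcov1 : ∀ x : V, x ∈ insert u A ∨ x ∈ insert v B := by
    intro x
    rcases hcover x with hx | hx | rfl | rfl
    · exact Or.inl (Finset.mem_insert_of_mem hx)
    · exact Or.inr (Finset.mem_insert_of_mem hx)
    · exact Or.inl (Finset.mem_insert_self _ _)
    · exact Or.inr (Finset.mem_insert_self _ _)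
  have hcov2 : ∀ x : V, x ∈ insert v A ∨ x ∈ insert u B := by
    intro x
    rcases hcover x with hx | hx | rfl | rfl
    · exact Or.inl (Finset.mem_insert_of_mem hx)
    · exact Or.inr (Finset.mem_insert_of_mem hx)
    · exact Or.inr (Finset.mem_insert_self _ _)
    · exact Or.inl (Finset.mem_insert_self _ _)
  have hQ : ∀ M : Finset G.E, G.IsPM M →
      ((∀ e ∈ M, G.bothIn (insert u A) e ∨ G.bothIn (insert v B) e) ∨
       (∀ e ∈ M, G.bothIn (insert v A) e ∨ G.bothIn (insert u B) e)) := by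
    intro M hM
    have hM2 : ∀ x : V, ∃! e, e ∈ M ∧ G.inc e x := fun x => hM.2 x (Finset.mem_univ x)
    rcases EMG.aux_parity G u v huv A B hdisj huA huB hvA hvB hcover hsep hodd M hM2 with
      ⟨⟨e0, he0M, he0⟩, hMv⟩ | ⟨⟨e0, he0M, he0⟩, hMu⟩
    · exact Or.inl (EMG.aux_halfcover G u v huv A B hdisj huA huB hvA hvB hcover hsep
        M hM2 hMv e0 he0M he0)
    · refine Or.inr (EMG.aux_halfcover G v u huv.symm A B hdisj hvA hvB huA huB ?_
        hsep M hM2 hMu e0 he0M he0)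
      intro x
      rcases hcover x with hx | hx | hx | hx
      · exact Or.inl hx
      · exact Or.inr (Or.inl hx)
      · exact Or.inr (Or.inr (Or.inr hx))
      · exact Or.inr (Or.inr (Or.inl hx))
  have hexcl : ∀ M : Finset G.E, G.IsPM M →
      (∀ e ∈ M, G.bothIn (insert v A) e ∨ G.bothIn (insert u B) e) →
      ¬ (∀ e ∈ M, G.bothIn (insert u A) e ∨ G.bothIn (insert v B) e) := by
    intro M hM hQ2 hQ1
    obtain ⟨e, ⟨heM, hinc⟩, _⟩ := hM.2 u (Finset.mem_univ u)
    have h1 : G.bothIn (insert u A) e := by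
      rcases hQ1 e heM with hb | hb
      · exact hb
      · exfalso
        rcases hinc with hh | hh
        · rcases Finset.mem_insert.mp (hh ▸ hb.1) with h' | h'
          · exact huv h'
          · exact huB h'
        · rcases Finset.mem_insert.mp (hh ▸ hb.2) with h' | h'
          · exact huv h'
          · exact huB h'
    have h2 : G.bothIn (insert u B) e := by
      rcases hQ2 e heM with hb | hb
      · exfalso
        rcases hinc with hh | hh
        · rcases Finset.mem_insert.mp (hh ▸ hb.1) with h' | h'
          · exact huv h'
          · exact huA h'
        · rcases Finset.mem_insert.mp (hh ▸ hb.2) with h' | h'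
          · exact huv h'
          · exact huA h'
      · exact hb
    rcases hinc with hh | hh
    · have hsne : G.snd e ≠ u := fun h => G.noLoop e (hh.trans h.symm)
      rcases Finset.mem_insert.mp h1.2 with h' | h'
      · exact hsne h'
      · rcases Finset.mem_insert.mp h2.2 with h'' | h''
        · exact hsne h''
        · exact Finset.disjoint_left.mp hdisj h' h''
    · have hsne : G.fst e ≠ u := fun h => G.noLoop e (h.trans hh.symm)
      rcases Finset.mem_insert.mp h1.1 with h' | h'
      · exact hsne h'
      · rcases Finset.mem_insert.mp h2.1 with h'' | h''
        · exact hsne h''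
        · exact Finset.disjoint_left.mp hdisj h' h''
  have hsplit : G.wcol c = G.wcolOn (insert u A) c * G.wcolOn (insert v B) c +
      G.wcolOn (insert v A) c * G.wcolOn (insert u B) c := by
    have hrfl : G.wcol c =
        ∑ M ∈ Finset.univ.filter (fun M => G.IsPM M ∧ G.Induces M c), ∏ e ∈ M, G.w e := rfl
    rw [hrfl, ← Finset.sum_filter_add_sum_filter_not _
      (fun M => ∀ e ∈ M, G.bothIn (insert u A) e ∨ G.bothIn (insert v B) e),
      Finset.filter_filter, Finset.filter_filter]
    congr 1
    · exact EMG.aux_split G _ _ hd1 hcov1 c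
    · have hfc : Finset.univ.filter (fun M => (G.IsPM M ∧ G.Induces M c) ∧
          ¬ ∀ e ∈ M, G.bothIn (insert u A) e ∨ G.bothIn (insert v B) e) =
        Finset.univ.filter (fun M => (G.IsPM M ∧ G.Induces M c) ∧
          ∀ e ∈ M, G.bothIn (insert v A) e ∨ G.bothIn (insert u B) e) := by
        apply Finset.filter_congr
        intro M _
        constructor
        · rintro ⟨hp, hn⟩
          refine ⟨hp, ?_⟩
          rcases hQ M hp.1 with hq | hq
          · exact absurd hq hn
          · exact hq
        · rintro ⟨hp, hq2⟩
          exact ⟨hp, hexcl M hp.1 hq2⟩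
      rw [hfc]
      exact EMG.aux_split G _ _ hd2 hcov2 c
  rw [hX, hY, hZ, hW] at h ⊢
  have hsum : G.wcolOn (insert u A) c * G.wcolOn (insert v B) c +
      G.wcolOn (insert v A) c * G.wcolOn (insert u B) c = 0 := hsplit.symm.trans h0
  have hboth : G.wcolOn (insert u A) c * G.wcolOn (insert v B) c ≠ 0 ∧
      G.wcolOn (insert v A) c * G.wcolOn (insert u B) c ≠ 0 := by
    rcases h with hh | hh
    · have hzw : G.wcolOn (insert v A) c * G.wcolOn (insert u B) c ≠ 0 := by
        rwa [mul_comm] at hh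
      refine ⟨?_, hzw⟩
      rw [eq_neg_of_add_eq_zero_left hsum]
      exact neg_ne_zero.mpr hzw
    · refine ⟨hh, ?_⟩
      rw [eq_neg_of_add_eq_zero_right hsum]
      exact neg_ne_zero.mpr hh
  obtain ⟨hx1, hy1⟩ := mul_ne_zero_iff.mp hboth.1
  obtain ⟨hz1, hw1⟩ := mul_ne_zero_iff.mp hboth.2
  exact ⟨hx1, hy1, hz1, hw1⟩
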